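/- Let M be a matroid with rank function r on a finite ground set 𝒳 all of whose independent sets have cardinality at most q, and let ≻ be a strict linear order on 𝒳. There exists exactly one choice rule C on 𝒳 satisfying all of: (i) matroidal objectives: for every A ⊆ 𝒳 and every A′ ⊆ A, r(C(A)) ≥ r(A′); (ii) no justified envy under rank: for every A ⊆ 𝒳, x ∈ C(A), and y ∈ A \ C(A), if y ≻ x then r((C(A) \ {x}) ∪ {y}) < r(C(A)); (iii) non-wastefulness: |C(A)| = min(|A|, q) for every A ⊆ 𝒳. -/

import Mathlib

/-- A matroid on the finite ground set `α`, given by its independent sets. -/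
structure FinMatroid (α : Type*) [DecidableEq α] where
  Indep : Finset α → Prop
  indep_empty : Indep ∅
  indep_subset : ∀ ⦃A B : Finset α⦄, Indep B → A ⊆ B → Indep A
  indep_exchange : ∀ ⦃A B : Finset α⦄, Indep A → Indep B → A.card < B.card →
    ∃ x ∈ B, x ∉ A ∧ Indep (insert x A)

open Classical in
/-- The rank of a set: the common cardinality of its maximal independent
subsets. -/
noncomputable def FinMatroid.rank {α : Type*} [DecidableEq α]
    (M : FinMatroid α) (X : Finset α) : ℕ :=
  (X.powerset.filter fun A => M.Indep A).sup Finset.card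

/-- `Y` is a basis of `X`: a maximal independent subset of `X`. -/
def FinMatroid.IsBasisOf {α : Type*} [DecidableEq α]
    (M : FinMatroid α) (Y X : Finset α) : Prop :=
  Y ⊆ X ∧ M.Indep Y ∧ ∀ Z : Finset α, Z ⊆ X → M.Indep Z → Y ⊆ Z → Z = Y

/-! Write `k = min (|A|, q)`, so that `r(A) ≤ k ≤ |A|`. A set `C` satisfies `C ⊆ A`, (i) and
(iii) exactly when it is a `k`-subset of `A` spanning `A`, and these sets are the bases of a
matroid: the elongation of `M|A` to rank `k`. Condition (ii) then says that no basis arises from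
`C` by exchanging an element for a larger one. In any matroid such an exchange-maximal basis is
the colex-greatest basis: if a basis `I` were colex-larger, let `y` be the largest element of
`I \ C`; extending `{y}` together with the elements of `C` above `y` by elements of `C` gives a
basis `C - x + y` with `x < y`. This gives existence and uniqueness at once. -/

theorem Finset.card_insert_erase_of_mem_of_notMem {α : Type*} [DecidableEq α] {s : Finset α}
    {x y : α} (hx : x ∈ s) (hy : y ∉ s) : (insert y (s.erase x)).card = s.card := by
  rw [card_insert_of_notMem (fun h => hy (mem_of_mem_erase h)), card_erase_add_one hx]

namespace FinMatroid

open Finset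

section DecidableEq

variable {α : Type*} [DecidableEq α] (M : FinMatroid α)

open Classical in
lemma card_le_rank {B X : Finset α} (hBX : B ⊆ X) (hB : M.Indep B) : B.card ≤ M.rank X :=
  le_sup (by simp [hBX, hB])

open Classical in
lemma exists_indep_card_eq_rank (X : Finset α) :
    ∃ B, B ⊆ X ∧ M.Indep B ∧ B.card = M.rank X := by
  obtain ⟨B, hB, hBcard⟩ :=
    exists_mem_eq_sup (X.powerset.filter fun A => M.Indep A) ⟨∅, by simp [M.indep_empty]⟩ card
  simp only [mem_filter, mem_powerset] at hB
  exact ⟨B, hB.1, hB.2, hBcard.symm⟩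

open Classical in
lemma rank_le_card (X : Finset α) : M.rank X ≤ X.card :=
  Finset.sup_le fun _ hB => card_le_card (mem_powerset.1 (mem_filter.1 hB).1)

lemma rank_mono {X Y : Finset α} (h : X ⊆ Y) : M.rank X ≤ M.rank Y := by
  obtain ⟨B, hBX, hB, hBcard⟩ := M.exists_indep_card_eq_rank X
  exact hBcard ▸ M.card_le_rank (hBX.trans h) hB

lemma rank_le_rank_add_card_sdiff (S T : Finset α) : M.rank T ≤ M.rank S + (T \ S).card := by
  obtain ⟨B, hBT, hB, hBcard⟩ := M.exists_indep_card_eq_rank T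
  have hinter : (B ∩ S).card ≤ M.rank S :=
    M.card_le_rank inter_subset_right (M.indep_subset hB inter_subset_left)
  have hsdiff : (B \ S).card ≤ (T \ S).card := card_le_card (sdiff_subset_sdiff hBT le_rfl)
  have := card_sdiff_add_card_inter B S
  omega

lemma exists_mem_rank_lt_rank_insert {S T : Finset α} (h : M.rank S < M.rank T) :
    ∃ x ∈ T, M.rank S < M.rank (insert x S) := by
  obtain ⟨B, hBS, hB, hBcard⟩ := M.exists_indep_card_eq_rank S
  obtain ⟨B', hB'T, hB', hB'card⟩ := M.exists_indep_card_eq_rank T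
  obtain ⟨x, hxB', hxB, hxB_indep⟩ := M.indep_exchange hB hB' (by omega)
  have := M.card_le_rank (insert_subset_insert x hBS) hxB_indep
  rw [card_insert_of_notMem hxB] at this
  exact ⟨x, hB'T hxB', by omega⟩

variable {M} in
lemma Indep.exists_superset_subset_union_card_eq {I B : Finset α} (hI : M.Indep I)
    (hB : M.Indep B) (hcard : I.card ≤ B.card) :
    ∃ J, M.Indep J ∧ I ⊆ J ∧ J ⊆ I ∪ B ∧ J.card = B.card := by
  obtain ⟨n, hn⟩ := Nat.exists_eq_add_of_le hcard
  induction n generalizing I with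
  | zero => exact ⟨I, hI, subset_rfl, subset_union_left, hn.symm⟩
  | succ n ih =>
    obtain ⟨x, hxB, hxI, hxI_indep⟩ := M.indep_exchange hI hB (by omega)
    obtain ⟨J, hJ, hIJ, hJsub, hJcard⟩ :=
      ih (I := insert x I) hxI_indep (by rw [card_insert_of_notMem hxI]; omega)
        (by rw [card_insert_of_notMem hxI]; omega)
    refine ⟨J, hJ, (subset_insert x I).trans hIJ, hJsub.trans ?_, hJcard⟩
    rw [insert_union]
    exact insert_subset (mem_union_right I hxB) subset_rfl

lemma rank_le_min_card {q : ℕ} (hq : ∀ A : Finset α, M.Indep A → A.card ≤ q) (A : Finset α) :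
    M.rank A ≤ min A.card q := by
  obtain ⟨B, -, hB, hBcard⟩ := M.exists_indep_card_eq_rank A
  exact le_min (M.rank_le_card A) (hBcard ▸ hq B hB)

lemma rank_add_card_le_rank_add_card {S T : Finset α} (h : S ⊆ T) :
    M.rank T + S.card ≤ M.rank S + T.card := by
  have := M.rank_le_rank_add_card_sdiff S T
  have := card_sdiff_add_card_eq_card h
  omega

/-- The elongation of `M|A` to rank `k`: its independent sets are the subsets of `A` that extend
to a `k`-subset of `A` spanning `A`. -/
def elongation (A : Finset α) (k : ℕ) (hk : M.rank A ≤ k) : FinMatroid α where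
  Indep S := S ⊆ A ∧ S.card ≤ k ∧ M.rank A + S.card ≤ M.rank S + k
  indep_empty := ⟨empty_subset A, Nat.zero_le k, by simpa using hk.trans (Nat.le_add_left k _)⟩
  indep_subset S T := by
    rintro ⟨hTA, hTk, hTrank⟩ hST
    have := M.rank_add_card_le_rank_add_card hST
    have := card_le_card hST
    exact ⟨hST.trans hTA, by omega, by omega⟩
  indep_exchange S T := by
    rintro ⟨hSA, hSk, hSrank⟩ ⟨hTA, hTk, hTrank⟩ hST
    suffices ∃ x ∈ T, x ∉ S ∧ M.rank A + S.card < M.rank (insert x S) + k by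
      obtain ⟨x, hxT, hxS, hx⟩ := this
      refine ⟨x, hxT, hxS, insert_subset (hTA hxT) hSA, ?_, ?_⟩ <;>
        rw [card_insert_of_notMem hxS] <;> omega
    by_cases hslack : M.rank A + S.card < M.rank S + k
    · obtain ⟨x, hxT, hxS⟩ := exists_mem_notMem_of_card_lt_card hST
      exact ⟨x, hxT, hxS, hslack.trans_le (by gcongr; exact M.rank_mono (subset_insert x S))⟩
    · obtain ⟨x, hxT, hx⟩ := M.exists_mem_rank_lt_rank_insert (S := S) (T := T) (by omega)
      have hxS : x ∉ S := fun hxS => by rw [insert_eq_of_mem hxS] at hx; exact hx.false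
      exact ⟨x, hxT, hxS, by omega⟩

lemma elongation_indep_iff {A S : Finset α} {k : ℕ} (hk : M.rank A ≤ k) (hS : S.card = k) :
    (M.elongation A k hk).Indep S ↔ S ⊆ A ∧ M.rank A ≤ M.rank S := by
  simp only [elongation, hS, le_refl, true_and, add_le_add_iff_right]

lemma exists_elongation_indep_card_eq {A : Finset α} {k : ℕ} (hk : M.rank A ≤ k)
    (hkA : k ≤ A.card) : ∃ S, (M.elongation A k hk).Indep S ∧ S.card = k := by
  obtain ⟨B, hBA, hB, hBcard⟩ := M.exists_indep_card_eq_rank A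
  obtain ⟨S, hBS, hSA, hScard⟩ := exists_subsuperset_card_eq hBA (hBcard ▸ hk) hkA
  refine ⟨S, (M.elongation_indep_iff hk hScard).2 ⟨hSA, ?_⟩, hScard⟩
  exact hBcard ▸ M.card_le_rank hBS hB

end DecidableEq

section ExchangeMaximal

variable {α : Type*} [LinearOrder α] (M : FinMatroid α)

def IsExchangeMaximal (B : Finset α) : Prop :=
  M.Indep B ∧ ∀ x ∈ B, ∀ y ∉ B, x < y → ¬ M.Indep (insert y (B.erase x))

variable {M}

lemma IsExchangeMaximal.toColex_le {B I : Finset α} (hB : M.IsExchangeMaximal B)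
    (hI : M.Indep I) (hcard : I.card ≤ B.card) : toColex I ≤ toColex B := by
  by_contra hlt
  obtain ⟨y, hyI, hyB, hy⟩ :=
    Colex.toColex_lt_toColex_iff_exists_forall_lt.1 (not_le.1 hlt)
  set T := B.filter (y < ·)
  have hTI : insert y T ⊆ I := insert_subset hyI fun b hb => by
    by_contra hbI
    exact (hy b (mem_filter.1 hb).1 hbI).not_gt (mem_filter.1 hb).2
  obtain ⟨J, hJ, hTJ, hJsub, hJcard⟩ :=
    (M.indep_subset hI hTI).exists_superset_subset_union_card_eq hB.1
      ((card_le_card hTI).trans hcard)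
  have hJyB : J ⊆ insert y B := hJsub.trans <|
    union_subset (insert_subset_insert y (filter_subset _ B)) (subset_insert y B)
  obtain ⟨x, hxB, hxJ⟩ : ∃ x ∈ B, x ∉ J := by
    by_contra! hBJ
    have := card_le_card (insert_subset (hTJ (mem_insert_self y T)) hBJ)
    rw [card_insert_of_notMem hyB] at this
    omega
  have hxy : x < y := by
    refine lt_of_le_of_ne (not_lt.1 fun hyx => hxJ (hTJ ?_)) (ne_of_mem_of_not_mem hxB hyB)
    exact mem_insert_of_mem (mem_filter.2 ⟨hxB, hyx⟩)
  have hJeq : J = insert y (B.erase x) := by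
    refine eq_of_subset_of_card_le (fun b hb => ?_) ?_
    · rcases mem_insert.1 (hJyB hb) with rfl | hbB
      · exact mem_insert_self b _
      · exact mem_insert_of_mem (mem_erase.2 ⟨ne_of_mem_of_not_mem hb hxJ, hbB⟩)
    · rw [card_insert_erase_of_mem_of_notMem hxB hyB, hJcard]
  exact hB.2 x hxB y hyB hxy (hJeq ▸ hJ)

lemma isExchangeMaximal_of_forall_toColex_le {B : Finset α} (hB : M.Indep B)
    (hmax : ∀ I, M.Indep I → I.card = B.card → toColex I ≤ toColex B) :
    M.IsExchangeMaximal B := by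
  refine ⟨hB, fun x hxB y hyB hxy hindep => ?_⟩
  have hlt : toColex (insert x (B.erase x)) < toColex (insert y (B.erase x)) :=
    (Colex.insert_lt_insert (notMem_erase x B) fun h => hyB (mem_of_mem_erase h)).2 hxy
  rw [insert_erase hxB] at hlt
  exact (hmax _ hindep (card_insert_erase_of_mem_of_notMem hxB hyB)).not_gt hlt

lemma existsUnique_isExchangeMaximal_card_eq {A : Finset α} (hA : ∀ I, M.Indep I → I ⊆ A)
    {k : ℕ} (hk : ∃ I, M.Indep I ∧ I.card = k) :
    ∃! B, M.IsExchangeMaximal B ∧ B.card = k := by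
  classical
  set 𝓑 := A.powerset.filter fun I => M.Indep I ∧ I.card = k
  have h𝓑 : ∀ {I}, I ∈ 𝓑 ↔ M.Indep I ∧ I.card = k := fun {I} => by
    simp only [𝓑, mem_filter, mem_powerset, and_iff_right_iff_imp]
    exact fun hI => hA I hI.1
  obtain ⟨I, hI⟩ := hk
  obtain ⟨B, hB𝓑, hBmax⟩ := exists_max_image 𝓑 toColex ⟨I, h𝓑.2 hI⟩
  obtain ⟨hB, hBcard⟩ := h𝓑.1 hB𝓑
  have hBmax' : M.IsExchangeMaximal B := isExchangeMaximal_of_forall_toColex_le hB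
    fun I hI hIcard => hBmax I (h𝓑.2 ⟨hI, hIcard.trans hBcard⟩)
  refine ⟨B, ⟨hBmax', hBcard⟩, fun B' ⟨hB'max, hB'card⟩ => toColex_inj.1 (le_antisymm ?_ ?_)⟩
  · exact hBmax'.toColex_le hB'max.1 (hB'card.trans hBcard.symm).le
  · exact hB'max.toColex_le hB (hBcard.trans hB'card.symm).le

lemma isExchangeMaximal_elongation_iff {A C : Finset α} {k : ℕ}
    (hk : M.rank A ≤ k) :
    (M.elongation A k hk).IsExchangeMaximal C ∧ C.card = k ↔
      C ⊆ A ∧ (∀ A' : Finset α, A' ⊆ A → M.rank A' ≤ M.rank C) ∧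
      (∀ x ∈ C, ∀ y ∈ A \ C, y > x → M.rank (insert y (C.erase x)) < M.rank C) ∧
      C.card = k := by
  have hexch_card {x y} (hx : x ∈ C) (hy : y ∉ C) (hC : C.card = k) :
      (insert y (C.erase x)).card = k :=
    (card_insert_erase_of_mem_of_notMem hx hy).trans hC
  constructor
  · rintro ⟨⟨hC, hCmax⟩, hCcard⟩
    obtain ⟨hCA, hrank⟩ := (M.elongation_indep_iff hk hCcard).1 hC
    refine ⟨hCA, fun A' hA' => (M.rank_mono hA').trans hrank, fun x hx y hy hxy => ?_, hCcard⟩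
    obtain ⟨hyA, hyC⟩ := mem_sdiff.1 hy
    by_contra! hle
    refine hCmax x hx y hyC hxy ((M.elongation_indep_iff hk (hexch_card hx hyC hCcard)).2 ?_)
    exact ⟨insert_subset hyA ((erase_subset x C).trans hCA), hrank.trans hle⟩
  · rintro ⟨hCA, hrank, henvy, hCcard⟩
    refine ⟨⟨(M.elongation_indep_iff hk hCcard).2 ⟨hCA, hrank A subset_rfl⟩,
      fun x hx y hyC hxy hindep => ?_⟩, hCcard⟩
    obtain ⟨hsub, hle⟩ := (M.elongation_indep_iff hk (hexch_card hx hyC hCcard)).1 hindep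
    exact (henvy x hx y (mem_sdiff.2 ⟨hsub (mem_insert_self y _), hyC⟩) hxy).not_ge
      ((M.rank_mono hCA).trans hle)

end ExchangeMaximal

end FinMatroid

theorem nonWastefulMatroid_characterization_general
    {α : Type*} [LinearOrder α] (M : FinMatroid α) (q : ℕ)
    (hq : ∀ A : Finset α, M.Indep A → A.card ≤ q) :
    ∃! C : Finset α → Finset α,
      (∀ A : Finset α, C A ⊆ A) ∧
      -- (i) matroidal objectives
      (∀ A A' : Finset α, A' ⊆ A → M.rank A' ≤ M.rank (C A)) ∧
      -- (ii) no justified envy under rank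
      (∀ A : Finset α, ∀ x ∈ C A, ∀ y ∈ A \ C A,
        y > x → M.rank (insert y ((C A).erase x)) < M.rank (C A)) ∧
      -- (iii) non-wastefulness
      (∀ A : Finset α, (C A).card = min A.card q) := by
  have hk (A : Finset α) : M.rank A ≤ min A.card q := M.rank_le_min_card hq A
  have hchoice (A : Finset α) :
      ∃! C, (M.elongation A _ (hk A)).IsExchangeMaximal C ∧ C.card = min A.card q :=
    FinMatroid.existsUnique_isExchangeMaximal_card_eq (M := M.elongation A _ (hk A))
      (fun _ hI => hI.1)
      (M.exists_elongation_indep_card_eq (hk A) (min_le_left _ _))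
  choose C hC hCunique using hchoice
  have hspec (A C : Finset α) := FinMatroid.isExchangeMaximal_elongation_iff (C := C) (hk A)
  refine ⟨C, ?_, ?_⟩
  · have := fun A => (hspec A (C A)).1 (hC A)
    exact ⟨fun A => (this A).1, fun A => (this A).2.1, fun A => (this A).2.2.1,
      fun A => (this A).2.2.2⟩
  · rintro D ⟨hsub, hrank, henvy, hcard⟩
    exact funext fun A => hCunique A _ ((hspec A (D A)).2 ⟨hsub A, hrank A, henvy A, hcard A⟩)

/-- For a matroid all of whose independent sets have cardinality at most `q`,
there is exactly one choice rule satisfying matroidal objectives, no justified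
envy under rank, and non-wastefulness (the non-wasteful matroid choice rule). -/
theorem nonWastefulMatroid_characterization
    {α : Type*} [Fintype α] [LinearOrder α] (M : FinMatroid α) (q : ℕ)
    (hq : ∀ A : Finset α, M.Indep A → A.card ≤ q) :
    ∃! C : Finset α → Finset α,
      (∀ A : Finset α, C A ⊆ A) ∧
      -- (i) matroidal objectives
      (∀ A A' : Finset α, A' ⊆ A → M.rank A' ≤ M.rank (C A)) ∧
      -- (ii) no justified envy under rank
      (∀ A : Finset α, ∀ x ∈ C A, ∀ y ∈ A \ C A,
        y > x → M.rank (insert y ((C A).erase x)) < M.rank (C A)) ∧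
      -- (iii) non-wastefulness
      (∀ A : Finset α, (C A).card = min A.card q) :=
  nonWastefulMatroid_characterization_general M q hq
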